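/- arXiv:math/0702819 — 5 statements merged into one kernel-verified Lean document; each statement's English description precedes it below -/
import Mathlib

section
/- For every ε > 0 there exists a constant c ≥ 0 such that for every stopping time τ with respect to the filtration (F_n) satisfying E[τ] < ∞, one has E[M_τ] ≤ ε·E[τ] + c. In particular, E[M_τ] = o(E[τ]) uniformly over stopping times τ as E[τ] → ∞. -/
/-!
Truncate at a level `t ≥ 0` with `E[(W₁ - t)⁺] < ε`; then pointwise
`M n ≤ t + ∑_{k<n} (W_{k+1} - t)⁺`. The event `{k < τ}` lies in `ℱ k`, which is independent
of `W_{k+1}`, so Wald's identity gives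
`E[∑_{k<τ} (W_{k+1} - t)⁺] = E[(W₁ - t)⁺] E[τ] ≤ ε E[τ]`, whence `E[M_τ] ≤ ε E[τ] + t`.
-/

open MeasureTheory ProbabilityTheory Filter Finset
open scoped ENNReal Topology

theorem ENNReal.ofReal_le_add_sum_ofReal_sub_of_le_max {x w : ℕ → ℝ} {a : ℝ} (h0 : x 0 ≤ a)
    (hx : ∀ n, x (n + 1) ≤ max (x n) (w (n + 1))) (n : ℕ) :
    ENNReal.ofReal (x n) ≤ ENNReal.ofReal a + ∑ k ∈ range n, ENNReal.ofReal (w (k + 1) - a) := by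
  induction n with
  | zero => simpa using ENNReal.ofReal_le_ofReal h0
  | succ n ih =>
    refine (ENNReal.ofReal_le_ofReal (hx n)).trans ?_
    rw [ENNReal.ofReal_max, sum_range_succ, ← add_assoc]
    refine max_le (ih.trans le_self_add) ?_
    calc ENNReal.ofReal (w (n + 1))
        = ENNReal.ofReal (a + (w (n + 1) - a)) := by rw [add_sub_cancel]
      _ ≤ ENNReal.ofReal a + ENNReal.ofReal (w (n + 1) - a) := ENNReal.ofReal_add_le
      _ ≤ _ := by gcongr; exact le_self_add

section

variable {Ω : Type*} {m mΩ : MeasurableSpace Ω} {μ : Measure Ω}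

theorem integral_le_toReal_lintegral_ofReal (f : Ω → ℝ) :
    ∫ ω, f ω ∂μ ≤ (∫⁻ ω, ENNReal.ofReal (f ω) ∂μ).toReal := by
  by_cases hf : Integrable f μ
  · rw [integral_eq_lintegral_pos_part_sub_lintegral_neg_part hf]
    exact sub_le_self _ ENNReal.toReal_nonneg
  · rw [integral_undef hf]
    exact ENNReal.toReal_nonneg

theorem tendsto_lintegral_ofReal_sub_atTop {f : Ω → ℝ} (hf : Integrable f μ) :
    Tendsto (fun t : ℝ => ∫⁻ ω, ENNReal.ofReal (f ω - t) ∂μ) atTop (𝓝 0) := by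
  have hlim : ∀ ω, Tendsto (fun t : ℝ => ENNReal.ofReal (f ω - t)) atTop (𝓝 0) := fun ω =>
    tendsto_const_nhds.congr' <| by
      filter_upwards [eventually_ge_atTop (f ω)] with t ht
      rw [ENNReal.ofReal_of_nonpos (sub_nonpos.2 ht)]
  have hbound : ∀ᶠ t in atTop, ∀ᵐ ω ∂μ, ENNReal.ofReal (f ω - t) ≤ ENNReal.ofReal (f ω) := by
    filter_upwards [eventually_ge_atTop 0] with t ht
    exact ae_of_all _ fun ω => ENNReal.ofReal_le_ofReal (by linarith)
  simpa using tendsto_lintegral_filter_of_dominated_convergence' _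
    (.of_forall fun t => (hf.aemeasurable.sub_const t).ennreal_ofReal) hbound
    hf.lintegral_lt_top.ne (ae_of_all _ hlim)

theorem ProbabilityTheory.Indep.setLIntegral_eq_mul (hm : m ≤ mΩ)
    {Y : Ω → ℝ≥0∞} (hY : Measurable Y) (hindep : Indep (.comap Y inferInstance) m μ) {A : Set Ω}
    (hA : MeasurableSet[m] A) :
    ∫⁻ ω in A, Y ω ∂μ = (∫⁻ ω, Y ω ∂μ) * μ A := by
  have hA' : MeasurableSet A := hm _ hA
  calc ∫⁻ ω in A, Y ω ∂μ = ∫⁻ ω, Y ω * A.indicator (fun _ => 1) ω ∂μ := by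
        rw [← lintegral_indicator hA']
        congr with ω
        by_cases hω : ω ∈ A <;> simp [hω]
    _ = (∫⁻ ω, Y ω ∂μ) * μ A := by
        rw [lintegral_mul_eq_lintegral_mul_lintegral_of_independent_measurableSpace hY.comap_le hm
          hindep (comap_measurable Y) (measurable_const.indicator hA), lintegral_indicator_const hA',
          one_mul]

theorem lintegral_sum_range_eq_tsum_setLIntegral {τ : Ω → ℕ}
    (hτ : ∀ k, MeasurableSet {ω | k < τ ω}) {Y : ℕ → Ω → ℝ≥0∞} (hY : ∀ k, AEMeasurable (Y k) μ) :
    ∫⁻ ω, ∑ k ∈ range (τ ω), Y k ω ∂μ = ∑' k, ∫⁻ ω in {ω | k < τ ω}, Y k ω ∂μ := by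
  have hsum : ∀ ω, ∑ k ∈ range (τ ω), Y k ω = ∑' k, {ω | k < τ ω}.indicator (Y k) ω := by
    intro ω
    rw [tsum_eq_sum (s := range (τ ω)) fun k hk => Set.indicator_of_notMem (by simpa using hk) _]
    exact sum_congr rfl fun k hk => (Set.indicator_of_mem (by simpa using hk) _).symm
  simp_rw [hsum, ← lintegral_indicator (hτ _)]
  exact lintegral_tsum fun k => (hY k).indicator (hτ k)

theorem lintegral_natCast_eq_tsum_measure_lt {τ : Ω → ℕ} (hτ : ∀ k, MeasurableSet {ω | k < τ ω}) :
    ∫⁻ ω, (τ ω : ℝ≥0∞) ∂μ = ∑' k, μ {ω | k < τ ω} := by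
  simpa using lintegral_sum_range_eq_tsum_setLIntegral (μ := μ) hτ (Y := fun _ _ => 1)
    fun _ => aemeasurable_const

theorem lintegral_sum_range_stoppingTime_eq_mul {ℱ : Filtration ℕ mΩ} {τ : Ω → ℕ}
    (hτ : IsStoppingTime ℱ fun ω => (τ ω : WithTop ℕ)) {Y : ℕ → Ω → ℝ≥0∞}
    (hY : ∀ k, Measurable (Y k)) (hY_indep : ∀ k, Indep (.comap (Y k) inferInstance) (ℱ k) μ)
    {K : ℝ≥0∞} (hK : ∀ k, ∫⁻ ω, Y k ω ∂μ = K) :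
    ∫⁻ ω, ∑ k ∈ range (τ ω), Y k ω ∂μ = K * ∫⁻ ω, (τ ω : ℝ≥0∞) ∂μ := by
  have hlt : ∀ k, MeasurableSet[ℱ k] {ω | k < τ ω} := fun k => by
    simpa using hτ.measurableSet_gt k
  have hlt' : ∀ k, MeasurableSet {ω | k < τ ω} := fun k => ℱ.le k _ (hlt k)
  rw [lintegral_sum_range_eq_tsum_setLIntegral hlt' fun k => (hY k).aemeasurable,
    lintegral_natCast_eq_tsum_measure_lt hlt', ← ENNReal.tsum_mul_left]
  congr with k
  rw [(hY_indep k).setLIntegral_eq_mul (ℱ.le k) (hY k) (hlt k), hK]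

theorem indep_comap_succ_iSup_comap_Icc {β : Type*} [MeasurableSpace β] {W : ℕ → Ω → β}
    (hW : ∀ n, Measurable (W (n + 1))) (hW_indep : iIndepFun (fun n => W (n + 1)) μ) (k : ℕ) :
    Indep (.comap (W (k + 1)) inferInstance) (⨆ i ∈ Set.Icc 1 k, .comap (W i) inferInstance) μ := by
  have hIcc : Set.Icc 1 k = (· + 1) '' Set.Iio k := by
    ext i
    simp only [Set.mem_Icc, Set.mem_image, Set.mem_Iio]
    exact ⟨fun h => ⟨i - 1, by omega, by omega⟩, by rintro ⟨j, hj, rfl⟩; omega⟩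
  rw [hIcc, iSup_image]
  simpa using indep_iSup_of_disjoint (m := fun n => .comap (W (n + 1)) inferInstance)
    (fun n => (hW n).comap_le) ((iIndepFun_iff_iIndep _ _ _).1 hW_indep)
    (T := Set.Iio k) (Set.disjoint_singleton_left.2 (lt_irrefl k))

end

theorem lintegral_ofReal_stoppedValue_le_of_le_max {Ω : Type*} {m : MeasurableSpace Ω}
    {P : Measure Ω} [IsProbabilityMeasure P] {ℱ : Filtration ℕ m} {W M : ℕ → Ω → ℝ}
    (hW_meas : ∀ k, Measurable (W (k + 1)))
    (hW_indep : ∀ k, Indep (.comap (W (k + 1)) inferInstance) (ℱ k) P)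
    (hW_ident : ∀ k, IdentDistrib (W (k + 1)) (W 1) P P) {t : ℝ} (hM0 : ∀ ω, M 0 ω ≤ t)
    (hM : ∀ n ω, M (n + 1) ω ≤ max (M n ω) (W (n + 1) ω)) {τ : Ω → ℕ}
    (hτ : IsStoppingTime ℱ fun ω => (τ ω : WithTop ℕ)) :
    ∫⁻ ω, ENNReal.ofReal (M (τ ω) ω) ∂P ≤
      ENNReal.ofReal t + (∫⁻ ω, ENNReal.ofReal (W 1 ω - t) ∂P) * ∫⁻ ω, (τ ω : ℝ≥0∞) ∂P := by
  set Y : ℕ → Ω → ℝ≥0∞ := fun k ω => ENNReal.ofReal (W (k + 1) ω - t)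
  have hg : Measurable fun x : ℝ => ENNReal.ofReal (x - t) := by fun_prop
  have hY_indep : ∀ k, Indep (.comap (Y k) inferInstance) (ℱ k) P := fun k =>
    indep_of_indep_of_le_left (hW_indep k) (hg.comp (comap_measurable _)).comap_le
  have hwald := lintegral_sum_range_stoppingTime_eq_mul (Y := Y)
    (K := ∫⁻ ω, ENNReal.ofReal (W 1 ω - t) ∂P) hτ (fun k => hg.comp (hW_meas k))
    hY_indep fun k => ((hW_ident k).comp hg).lintegral_eq
  calc ∫⁻ ω, ENNReal.ofReal (M (τ ω) ω) ∂P
      ≤ ∫⁻ ω, ENNReal.ofReal t + ∑ k ∈ range (τ ω), Y k ω ∂P :=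
        lintegral_mono fun ω => ENNReal.ofReal_le_add_sum_ofReal_sub_of_le_max
          (x := (M · ω)) (w := (W · ω)) (hM0 ω)
          (fun n => hM n ω) (τ ω)
    _ = _ := by rw [lintegral_add_left measurable_const, hwald, lintegral_const, measure_univ,
          mul_one]

theorem maxIID_stoppedValue_le_of_pos_general
    {Ω : Type*} {m : MeasurableSpace Ω} {P : Measure Ω} [IsProbabilityMeasure P]
    (W : ℕ → Ω → ℝ)
    (hW_meas : ∀ n, Measurable (W n))
    (hW_indep : iIndepFun (fun n : ℕ => W (n + 1)) P)
    (hW_ident : ∀ n, 1 ≤ n → IdentDistrib (W n) (W 1) P P)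
    (hW_int : ∀ n, 1 ≤ n → Integrable (W n) P)
    (ℱ : Filtration ℕ m)
    (hℱ : ∀ n, ℱ n = ⨆ i ∈ Set.Icc 1 n, MeasurableSpace.comap (W i) inferInstance)
    (M : ℕ → Ω → ℝ)
    (hM0 : M 0 = fun _ => 0)
    (hM : ∀ n, M (n + 1) = fun ω => max (M n ω) (W (n + 1) ω)) :
    ∀ ε : ℝ, 0 < ε → ∃ c : ℝ, 0 ≤ c ∧
      ∀ τ : Ω → ℕ, IsStoppingTime ℱ (fun ω => (τ ω : WithTop ℕ)) → Integrable (fun ω => (τ ω : ℝ)) P →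
        ∫ ω, M (τ ω) ω ∂P ≤ ε * ∫ ω, (τ ω : ℝ) ∂P + c := by
  intro ε hε
  obtain ⟨t, ht_lt, ht⟩ : ∃ t : ℝ, ∫⁻ ω, ENNReal.ofReal (W 1 ω - t) ∂P < ENNReal.ofReal ε ∧ 0 ≤ t :=
    (((tendsto_lintegral_ofReal_sub_atTop (hW_int 1 le_rfl)).eventually
      (gt_mem_nhds (ENNReal.ofReal_pos.2 hε))).and (eventually_ge_atTop 0)).exists
  refine ⟨t, ht, fun τ hτ hτ_int => ?_⟩
  have hbound := lintegral_ofReal_stoppedValue_le_of_le_max (fun k => hW_meas (k + 1))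
    (fun k => hℱ k ▸ indep_comap_succ_iSup_comap_Icc (fun n => hW_meas _) hW_indep k)
    (fun k => hW_ident (k + 1) k.succ_pos) (M := M) (t := t)
    (fun ω => by simp [hM0, ht]) (fun n ω => by rw [hM]) hτ
  have hτ_fin : ∫⁻ ω, (τ ω : ℝ≥0∞) ∂P ≠ ∞ := by simpa using hτ_int.lintegral_lt_top.ne
  have hτ_eq : ∫ ω, (τ ω : ℝ) ∂P = (∫⁻ ω, (τ ω : ℝ≥0∞) ∂P).toReal := by
    simpa using integral_eq_lintegral_of_nonneg_ae (.of_forall fun ω => Nat.cast_nonneg (τ ω))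
      hτ_int.aestronglyMeasurable
  calc ∫ ω, M (τ ω) ω ∂P ≤ (∫⁻ ω, ENNReal.ofReal (M (τ ω) ω) ∂P).toReal :=
        integral_le_toReal_lintegral_ofReal _
    _ ≤ (ENNReal.ofReal t + ENNReal.ofReal ε * ∫⁻ ω, (τ ω : ℝ≥0∞) ∂P).toReal := by
        refine ENNReal.toReal_mono (by finiteness) (hbound.trans ?_)
        gcongr
    _ = ε * ∫ ω, (τ ω : ℝ) ∂P + t := by
        rw [ENNReal.toReal_add (by finiteness) (by finiteness), ENNReal.toReal_mul,
          ENNReal.toReal_ofReal ht, ENNReal.toReal_ofReal hε.le, hτ_eq, add_comm]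

/-- Let `(W_n)_{n ≥ 1}` be i.i.d. nonnegative integrable random variables on a
probability space, `ℱ n = σ(W_1, …, W_n)` (with `ℱ 0` trivial), `M 0 = 0` and
`M n = max_{1 ≤ k ≤ n} W k`.  Then for every `ε > 0` there is a constant `c ≥ 0` such that for
every stopping time `τ` w.r.t. `ℱ` with `E[τ] < ∞` one has `E[M_τ] ≤ ε·E[τ] + c`. -/
theorem maxIID_stoppedValue_le_of_pos
    {Ω : Type*} {m : MeasurableSpace Ω} {P : Measure Ω} [IsProbabilityMeasure P]
    (W : ℕ → Ω → ℝ)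
    (hW_meas : ∀ n, Measurable (W n))
    (hW_indep : iIndepFun (fun n : ℕ => W (n + 1)) P)
    (hW_ident : ∀ n, 1 ≤ n → IdentDistrib (W n) (W 1) P P)
    (hW_nonneg : ∀ n ω, 1 ≤ n → 0 ≤ W n ω)
    (hW_int : ∀ n, 1 ≤ n → Integrable (W n) P)
    (ℱ : Filtration ℕ m)
    (hℱ : ∀ n, ℱ n = ⨆ i ∈ Set.Icc 1 n, MeasurableSpace.comap (W i) inferInstance)
    (M : ℕ → Ω → ℝ)
    (hM0 : M 0 = fun _ => 0)
    (hM : ∀ n, M (n + 1) = fun ω => max (M n ω) (W (n + 1) ω)) :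
    ∀ ε : ℝ, 0 < ε → ∃ c : ℝ, 0 ≤ c ∧
      ∀ τ : Ω → ℕ, IsStoppingTime ℱ (fun ω => (τ ω : WithTop ℕ)) → Integrable (fun ω => (τ ω : ℝ)) P →
        ∫ ω, M (τ ω) ω ∂P ≤ ε * ∫ ω, (τ ω : ℝ) ∂P + c :=
  maxIID_stoppedValue_le_of_pos_general W hW_meas hW_indep hW_ident hW_int ℱ hℱ M hM0 hM
end

section
/- If c > 0 and δ > 0 are constants such that E[(W_1 − c)^+] ≤ δ, then the process Z_n = max(M_n, c) − nδ, n ≥ 0, is a supermartingale with respect to the filtration (F_n). -/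
/-!
Since `max (max a w) c ≤ max a c + (w - c)⁺`, each step of `Z` is bounded by
`(W_{n+1} - c)⁺ - δ`, a variable independent of `ℱ n` whose mean is `E[(W_1 - c)⁺] - δ ≤ 0`.
Conditioning on `ℱ n` therefore lowers `Z (n + 1)` to at most `Z n`.
-/

open MeasureTheory ProbabilityTheory

theorem max_max_le_max_add_posPart (a w c : ℝ) : max (max a w) c ≤ max a c + max (w - c) 0 := by
  have := le_max_left a c
  have := le_max_right a c
  have := le_max_left (w - c) 0
  have := le_max_right (w - c) 0
  exact max_le (max_le (by linarith) (by linarith)) (by linarith)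

theorem ProbabilityTheory.indep_succ_iSup_Icc {Ω : Type*} {m : MeasurableSpace Ω} {P : Measure Ω}
    {s : ℕ → MeasurableSpace Ω} (h_le : ∀ n, s n ≤ m) (h_indep : iIndep (fun n ↦ s (n + 1)) P)
    (n : ℕ) : Indep (s (n + 1)) (⨆ i ∈ Set.Icc 1 n, s i) P := by
  have h := indep_iSup_of_disjoint (fun k ↦ h_le (k + 1)) h_indep
    (S := {n}) (T := Set.Ico 0 n) (by simp)
  rwa [iSup_singleton, ← iSup_image (f := (· + 1)) (g := s), Set.image_add_const_Ico, zero_add,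
    Set.Ico_add_one_right_eq_Icc] at h

theorem MeasureTheory.condExp_le_of_le_add_indep {Ω : Type*} {m m' m₀ : MeasurableSpace Ω}
    {P : Measure Ω} [IsFiniteMeasure P] (hm : m ≤ m₀) (hm' : m' ≤ m₀) (hindep : Indep m' m P)
    {X Y Z : Ω → ℝ} (hX : Integrable X P) (hY_meas : StronglyMeasurable[m'] Y)
    (hY : Integrable Y P) (hZ_meas : StronglyMeasurable[m] Z) (hZ : Integrable Z P)
    (hXYZ : X ≤ᵐ[P] Z + Y) (hY_mean : ∫ ω, Y ω ∂P ≤ 0) : P[X | m] ≤ᵐ[P] Z := by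
  have hY_cond : P[Y | m] =ᵐ[P] fun _ ↦ ∫ ω, Y ω ∂P := condExp_indep_eq hm' hm hY_meas hindep
  filter_upwards [condExp_mono (m := m) hX (hZ.add hY) hXYZ, condExp_add hZ hY m, hY_cond]
    with ω hmono hadd hYω
  rw [hadd, Pi.add_apply, condExp_of_stronglyMeasurable hm hZ_meas hZ, hYω] at hmono
  linarith

theorem ProbabilityTheory.IdentDistrib.integral_posPart_sub_sub_nonpos {Ω Ω' : Type*}
    {m : MeasurableSpace Ω} {m' : MeasurableSpace Ω'} {P : Measure Ω} {P' : Measure Ω'}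
    [IsProbabilityMeasure P] {X : Ω → ℝ} {X' : Ω' → ℝ} (hXX' : IdentDistrib X X' P P')
    (hX : Integrable X P) {c δ : ℝ} (h : ∫ ω, max (X' ω - c) 0 ∂P' ≤ δ) :
    ∫ ω, (max (X ω - c) 0 - δ) ∂P ≤ 0 := by
  have hmean : ∫ ω, max (X ω - c) 0 ∂P = ∫ ω, max (X' ω - c) 0 ∂P' :=
    (hXX'.comp ((measurable_id.sub measurable_const).max measurable_const)).integral_eq
  have hpos : Integrable (fun ω ↦ max (X ω - c) 0) P := (hX.sub (integrable_const c)).pos_part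
  rw [integral_sub hpos (integrable_const δ), hmean,
    integral_const, smul_eq_mul, probReal_univ, one_mul]
  linarith

section RunningMax

variable {Ω : Type*} {m : MeasurableSpace Ω} {W M : ℕ → Ω → ℝ}

theorem measurable_runningMax (hM0 : M 0 = fun _ ↦ 0)
    (hM : ∀ n, M (n + 1) = fun ω ↦ max (M n ω) (W (n + 1) ω)) {ℱ : Filtration ℕ m}
    (hW : ∀ n, Measurable[ℱ (n + 1)] (W (n + 1))) (n : ℕ) : Measurable[ℱ n] (M n) := by
  induction n with
  | zero => rw [hM0]; exact measurable_const
  | succ k ih => rw [hM k]; exact (ih.mono (ℱ.mono k.le_succ) le_rfl).max (hW k)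

theorem integrable_runningMax (hM0 : M 0 = fun _ ↦ 0)
    (hM : ∀ n, M (n + 1) = fun ω ↦ max (M n ω) (W (n + 1) ω)) {P : Measure Ω}
    (hW : ∀ n, Integrable (W (n + 1)) P) (n : ℕ) : Integrable (M n) P := by
  induction n with
  | zero => rw [hM0]; exact integrable_zero Ω ℝ P
  | succ k ih => rw [hM k]; exact ih.sup (hW k)

end RunningMax

theorem maxIID_sub_supermartingale_general
    {Ω : Type*} {m : MeasurableSpace Ω} {P : Measure Ω} [IsProbabilityMeasure P]
    (W : ℕ → Ω → ℝ)
    (hW_meas : ∀ n, Measurable (W n))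
    (hW_indep : iIndepFun (fun n : ℕ => W (n + 1)) P)
    (hW_ident : ∀ n, 1 ≤ n → IdentDistrib (W n) (W 1) P P)
    (hW_int : ∀ n, 1 ≤ n → Integrable (W n) P)
    (ℱ : Filtration ℕ m)
    (hℱ : ∀ n, ℱ n = ⨆ i ∈ Set.Icc 1 n, MeasurableSpace.comap (W i) inferInstance)
    (M : ℕ → Ω → ℝ)
    (hM0 : M 0 = fun _ => 0)
    (hM : ∀ n, M (n + 1) = fun ω => max (M n ω) (W (n + 1) ω))
    (c δ : ℝ)
    (hWc : ∫ ω, max (W 1 ω - c) 0 ∂P ≤ δ) :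
    Supermartingale (fun n ω => max (M n ω) c - n * δ) ℱ P := by
  have hW_int' (n : ℕ) : Integrable (W (n + 1)) P := hW_int (n + 1) n.succ_pos
  have hW_adapted (n : ℕ) : Measurable[ℱ (n + 1)] (W (n + 1)) := by
    rw [hℱ]
    exact (comap_measurable _).mono (le_biSup (fun i ↦ MeasurableSpace.comap (W i) _)
      (Set.mem_Icc.2 ⟨n.succ_pos, le_rfl⟩)) le_rfl
  have hZ_meas (n : ℕ) : StronglyMeasurable[ℱ n] (fun ω ↦ max (M n ω) c - n * δ) :=
    (((measurable_runningMax hM0 hM hW_adapted n).max measurable_const).sub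
      measurable_const).stronglyMeasurable
  have hZ_int (n : ℕ) : Integrable (fun ω ↦ max (M n ω) c - n * δ) P :=
    ((integrable_runningMax hM0 hM hW_int' n).sup (integrable_const c)).sub (integrable_const _)
  refine supermartingale_nat hZ_meas hZ_int fun n ↦ ?_
  have hindep := indep_succ_iSup_Icc (fun n ↦ (hW_meas n).comap_le)
    ((iIndepFun_iff_iIndep _ _ _).1 hW_indep) n
  rw [← hℱ] at hindep
  have hY_meas : StronglyMeasurable[MeasurableSpace.comap (W (n + 1)) inferInstance]
      (fun ω ↦ max (W (n + 1) ω - c) 0 - δ) :=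
    ((((comap_measurable _).sub measurable_const).max measurable_const).sub
      measurable_const).stronglyMeasurable
  refine condExp_le_of_le_add_indep (ℱ.le n) (hW_meas (n + 1)).comap_le hindep (hZ_int (n + 1))
    hY_meas (((hW_int' n).sub (integrable_const c)).pos_part.sub (integrable_const δ))
    (hZ_meas n) (hZ_int n) (Filter.Eventually.of_forall fun ω ↦ ?_)
    ((hW_ident (n + 1) n.succ_pos).integral_posPart_sub_sub_nonpos (hW_int' n) hWc)
  have := max_max_le_max_add_posPart (M n ω) (W (n + 1) ω) c
  simp only [hM n, Pi.add_apply, Nat.cast_add, Nat.cast_one]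
  linarith

/-- With `(W_n)_{n ≥ 1}` i.i.d. nonnegative integrable, `ℱ n = σ(W_1, …, W_n)`,
`M 0 = 0`, `M n = max_{1 ≤ k ≤ n} W k`: if `c > 0`, `δ > 0` and `E[(W_1 − c)⁺] ≤ δ`, then
`Z n = max(M n, c) − n·δ` is a supermartingale with respect to `ℱ`. -/
theorem maxIID_sub_supermartingale
    {Ω : Type*} {m : MeasurableSpace Ω} {P : Measure Ω} [IsProbabilityMeasure P]
    (W : ℕ → Ω → ℝ)
    (hW_meas : ∀ n, Measurable (W n))
    (hW_indep : iIndepFun (fun n : ℕ => W (n + 1)) P)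
    (hW_ident : ∀ n, 1 ≤ n → IdentDistrib (W n) (W 1) P P)
    (hW_nonneg : ∀ n ω, 1 ≤ n → 0 ≤ W n ω)
    (hW_int : ∀ n, 1 ≤ n → Integrable (W n) P)
    (ℱ : Filtration ℕ m)
    (hℱ : ∀ n, ℱ n = ⨆ i ∈ Set.Icc 1 n, MeasurableSpace.comap (W i) inferInstance)
    (M : ℕ → Ω → ℝ)
    (hM0 : M 0 = fun _ => 0)
    (hM : ∀ n, M (n + 1) = fun ω => max (M n ω) (W (n + 1) ω))
    (c δ : ℝ) (hc : 0 < c) (hδ : 0 < δ)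
    (hWc : ∫ ω, max (W 1 ω - c) 0 ∂P ≤ δ) :
    Supermartingale (fun n ω => max (M n ω) c - n * δ) ℱ P :=
  maxIID_sub_supermartingale_general W hW_meas hW_indep hW_ident hW_int ℱ hℱ M hM0 hM c δ hWc
end

section
/- For every x ∈ D and every integer n ≥ 2, E_x[V(X_n)·1_{{σ ≥ n}}] ≤ (1 − β)·E_x[V(X_{n−1})·1_{{σ ≥ n−1}}]. -/
/-!
On `{σ ≥ m + 1}` the chain avoids `G` at the times `1, …, m`. This event is determined by
`X_0, …, X_m`, so the Markov property replaces `V(X_{m+1})` by `∫ V dκ(X_m, ·)`, which the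
drift condition bounds by `(1 - β) V(X_m)` because `X_m ∉ G`. It remains to enlarge
`{σ ≥ m + 1}` to `{σ ≥ m}`.
-/

open MeasureTheory ProbabilityTheory ENNReal

/-- The first hitting time `σ = inf {n ≥ 1 : ω n ∈ G}` of a set `G`, with value `⊤ = ∞`
if the trajectory never enters `G` at a positive time. -/
noncomputable def hittingTimeGe1 {D : Type*} (G : Set D) (ω : ℕ → D) : ℕ∞ :=
  ⨅ n ∈ {n : ℕ | 1 ≤ n ∧ ω n ∈ G}, (n : ℕ∞)

section HittingTime

variable {D : Type*} {G : Set D}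

lemma succ_le_hittingTimeGe1_iff {ω : ℕ → D} {m : ℕ} :
    ((m + 1 : ℕ) : ℕ∞) ≤ hittingTimeGe1 G ω ↔ ∀ i ∈ Finset.Icc 1 m, ω i ∉ G := by
  simp only [hittingTimeGe1, Set.mem_ofPred_eq, le_iInf_iff, and_imp, Nat.cast_le,
    Finset.mem_Icc]
  refine ⟨fun h i hi him hG => ?_, fun h i hi hG => ?_⟩
  · exact absurd (h i hi hG) (by omega)
  · by_contra! hlt
    exact h i hi (by omega) hG

lemma measurableSet_succ_le_hittingTimeGe1 [MeasurableSpace D] (hG : MeasurableSet G)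
    (m : ℕ) :
    MeasurableSet[MeasurableSpace.comap (fun (ω : ℕ → D) (i : Fin (m + 1)) => ω i)
      inferInstance] {ω | ((m + 1 : ℕ) : ℕ∞) ≤ hittingTimeGe1 G ω} := by
  have hcoord : ∀ i ∈ Finset.Icc 1 m, Measurable[MeasurableSpace.comap
      (fun (ω : ℕ → D) (i : Fin (m + 1)) => ω i) inferInstance] (fun ω : ℕ → D => ω i) :=
    fun i hi => (measurable_pi_apply (⟨i, by grind⟩ : Fin (m + 1))).comp
      (comap_measurable (fun (ω : ℕ → D) (i : Fin (m + 1)) => ω i))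
  simp_rw [succ_le_hittingTimeGe1_iff, Set.ofPred_forall]
  exact Finset.measurableSet_biInter _ fun i hi => hG.compl.preimage (hcoord i hi)

lemma le_hittingTimeGe1_of_succ_le {ω : ℕ → D} {m : ℕ}
    (h : ((m + 1 : ℕ) : ℕ∞) ≤ hittingTimeGe1 G ω) : (m : ℕ∞) ≤ hittingTimeGe1 G ω :=
  le_trans (by exact_mod_cast m.le_succ) h

end HittingTime

section MarkovStep

variable {D : Type*} [MeasurableSpace D] (κ : Kernel D D) {μ : Measure (ℕ → D)}
  {B : Set (ℕ → D)} {m : ℕ}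

lemma map_restrict_eq_bind_of_markov
    (hmarkov : ∀ A : Set D, MeasurableSet A →
      μ (B ∩ {ω | ω (m + 1) ∈ A}) = ∫⁻ ω in B, κ (ω m) A ∂μ) :
    (μ.restrict B).map (fun ω => ω (m + 1)) = (μ.restrict B).bind (fun ω => κ (ω m)) := by
  ext A hA
  have hκ : Measurable fun ω : ℕ → D => κ (ω m) := κ.measurable.comp (measurable_pi_apply m)
  rw [Measure.map_apply (measurable_pi_apply _) hA,
    Measure.restrict_apply (hA.preimage (measurable_pi_apply _)), Set.inter_comm,
    Measure.bind_apply hA hκ.aemeasurable, ← hmarkov A hA]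
  rfl

lemma setLIntegral_comp_succ_of_markov
    (hmarkov : ∀ A : Set D, MeasurableSet A →
      μ (B ∩ {ω | ω (m + 1) ∈ A}) = ∫⁻ ω in B, κ (ω m) A ∂μ)
    {g : D → ℝ≥0∞} (hg : Measurable g) :
    ∫⁻ ω in B, g (ω (m + 1)) ∂μ = ∫⁻ ω in B, ∫⁻ y, g y ∂(κ (ω m)) ∂μ := by
  have hκ : Measurable fun ω : ℕ → D => κ (ω m) := κ.measurable.comp (measurable_pi_apply m)
  rw [← lintegral_map hg (measurable_pi_apply _), map_restrict_eq_bind_of_markov κ hmarkov,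
    Measure.lintegral_bind hκ.aemeasurable hg.aemeasurable]

end MarkovStep

theorem drift_hitting_decay_general
    {D : Type*} [MeasurableSpace D]
    (κ : ProbabilityTheory.Kernel D D)
    (Px : D → Measure (ℕ → D))
    (hMarkov : ∀ (x : D) (n : ℕ) (B : Set (ℕ → D)),
      MeasurableSet[MeasurableSpace.comap (fun (ω : ℕ → D) (i : Fin (n + 1)) => ω i)
        inferInstance] B →
      ∀ A : Set D, MeasurableSet A →
        Px x (B ∩ {ω | ω (n + 1) ∈ A}) = ∫⁻ ω in B, κ (ω n) A ∂(Px x))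
    (V : D → ℝ) (hV_meas : Measurable V)
    (G : Set D) (hG : MeasurableSet G)
    (β b : ℝ) (hβ1 : β < 1)
    (hdrift : ∀ x, ∫⁻ y, ENNReal.ofReal (V y) ∂(κ x)
      ≤ ENNReal.ofReal ((1 - β) * V x + b * G.indicator 1 x)) :
    ∀ (x : D) (n : ℕ), 2 ≤ n →
      ∫⁻ ω in {ω | (n : ℕ∞) ≤ hittingTimeGe1 G ω}, ENNReal.ofReal (V (ω n)) ∂(Px x)
        ≤ ENNReal.ofReal (1 - β) *
          ∫⁻ ω in {ω | ((n - 1 : ℕ) : ℕ∞) ≤ hittingTimeGe1 G ω},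
            ENNReal.ofReal (V (ω (n - 1))) ∂(Px x) := by
  intro x n hn
  obtain ⟨m, rfl⟩ : ∃ m, n = m + 1 := ⟨n - 1, by omega⟩
  rw [Nat.add_sub_cancel]
  set B := {ω : ℕ → D | ((m + 1 : ℕ) : ℕ∞) ≤ hittingTimeGe1 G ω}
  have hV : Measurable fun y => ENNReal.ofReal (V y) := hV_meas.ennreal_ofReal
  have hVm : Measurable fun ω : ℕ → D => ENNReal.ofReal (V (ω m)) :=
    hV.comp (measurable_pi_apply m)
  have hdrift_off : ∀ ω ∈ B, ∫⁻ y, ENNReal.ofReal (V y) ∂(κ (ω m))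
      ≤ ENNReal.ofReal (1 - β) * ENNReal.ofReal (V (ω m)) := by
    intro ω hω
    have hωG : ω m ∉ G :=
      succ_le_hittingTimeGe1_iff.1 hω m (Finset.mem_Icc.2 ⟨by omega, le_rfl⟩)
    simpa [Set.indicator_of_notMem hωG, ENNReal.ofReal_mul (sub_nonneg.2 hβ1.le)]
      using hdrift (ω m)
  calc ∫⁻ ω in B, ENNReal.ofReal (V (ω (m + 1))) ∂(Px x)
      = ∫⁻ ω in B, ∫⁻ y, ENNReal.ofReal (V y) ∂(κ (ω m)) ∂(Px x) :=
        setLIntegral_comp_succ_of_markov κ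
          (hMarkov x m B (measurableSet_succ_le_hittingTimeGe1 hG m)) hV
    _ ≤ ∫⁻ ω in B, ENNReal.ofReal (1 - β) * ENNReal.ofReal (V (ω m)) ∂(Px x) :=
        setLIntegral_mono (hVm.const_mul _) hdrift_off
    _ = ENNReal.ofReal (1 - β) * ∫⁻ ω in B, ENNReal.ofReal (V (ω m)) ∂(Px x) :=
        lintegral_const_mul _ hVm
    _ ≤ _ := by
        gcongr
        exact fun ω => le_hittingTimeGe1_of_succ_le

/-- For the Markov chain with kernel `κ` started at `x` (law `Px x` on path
space), under the drift condition `∫ V(y) κ(x, dy) ≤ (1 − β)·V(x) + b·1_G(x)`, one has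
`E_x[V(X_n)·1_{σ ≥ n}] ≤ (1 − β)·E_x[V(X_{n−1})·1_{σ ≥ n−1}]` for every `n ≥ 2`. -/
theorem drift_hitting_decay
    {D : Type*} [MeasurableSpace D]
    (κ : ProbabilityTheory.Kernel D D) [ProbabilityTheory.IsMarkovKernel κ]
    (Px : D → Measure (ℕ → D))
    (hprob : ∀ x, IsProbabilityMeasure (Px x))
    (hstart : ∀ x, Px x {ω | ω 0 = x} = 1)
    (hMarkov : ∀ (x : D) (n : ℕ) (B : Set (ℕ → D)),
      MeasurableSet[MeasurableSpace.comap (fun (ω : ℕ → D) (i : Fin (n + 1)) => ω i)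
        inferInstance] B →
      ∀ A : Set D, MeasurableSet A →
        Px x (B ∩ {ω | ω (n + 1) ∈ A}) = ∫⁻ ω in B, κ (ω n) A ∂(Px x))
    (V : D → ℝ) (hV_meas : Measurable V) (hV_one : ∀ x, 1 ≤ V x)
    (G : Set D) (hG : MeasurableSet G)
    (β b : ℝ) (hβ : 0 < β) (hβ1 : β < 1) (hb : 0 ≤ b)
    (hdrift : ∀ x, ∫⁻ y, ENNReal.ofReal (V y) ∂(κ x)
      ≤ ENNReal.ofReal ((1 - β) * V x + b * G.indicator 1 x)) :
    ∀ (x : D) (n : ℕ), 2 ≤ n →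
      ∫⁻ ω in {ω | (n : ℕ∞) ≤ hittingTimeGe1 G ω}, ENNReal.ofReal (V (ω n)) ∂(Px x)
        ≤ ENNReal.ofReal (1 - β) *
          ∫⁻ ω in {ω | ((n - 1 : ℕ) : ℕ∞) ≤ hittingTimeGe1 G ω},
            ENNReal.ofReal (V (ω (n - 1))) ∂(Px x) :=
  drift_hitting_decay_general κ Px hMarkov V hV_meas G hG β b hβ1 hdrift
end

section
/- For every x ∈ D, E_x[ Σ_{n=1}^{σ} V(X_n) ] ≤ (V(x) + b)/β, where the sum is interpreted as Σ_{n≥1} V(X_n)·1_{{n ≤ σ}} with values in [0, ∞]. -/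
open MeasureTheory ProbabilityTheory ENNReal

/-!
Write `a n = E_x[V(X_n); n ≤ σ]` for `n ≥ 1`. The event `{n + 1 ≤ σ}` is determined by
`X_0, …, X_n` and forces `X_n ∉ G`, so the Markov property and the drift condition off `G` give
`a (n + 1) ≤ (1 - β) a n`. Since `{1 ≤ σ}` is the whole space, `a 1 = ∫ V dP(x, ·) ≤ V x + b`,
and summing the geometric series bounds `∑ a n` by `(V x + b) / β`.
-/

section HittingTime

variable {D : Type*} {G : Set D}

lemma le_hittingTimeGe1_iff {ω : ℕ → D} {n : ℕ} :
    (n : ℕ∞) ≤ hittingTimeGe1 G ω ↔ ∀ m, 1 ≤ m → m < n → ω m ∉ G := by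
  simp only [hittingTimeGe1, le_iInf₂_iff, Set.mem_ofPred_eq, Nat.cast_le, and_imp]
  exact forall_congr' fun m => ⟨fun h h1 hlt hm => (h h1 hm).not_gt hlt,
    fun h h1 hm => not_lt.mp fun hlt => h h1 hlt hm⟩

lemma notMem_of_succ_le_hittingTimeGe1 {ω : ℕ → D} {n : ℕ} (hn : 1 ≤ n)
    (h : ((n + 1 : ℕ) : ℕ∞) ≤ hittingTimeGe1 G ω) : ω n ∉ G :=
  le_hittingTimeGe1_iff.mp h n hn n.lt_succ_self

lemma antitone_setOf_le_hittingTimeGe1 (G : Set D) :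
    Antitone fun n : ℕ => {ω : ℕ → D | (n : ℕ∞) ≤ hittingTimeGe1 G ω} :=
  fun _ n hmn _ (h : (n : ℕ∞) ≤ _) => (Nat.cast_le.mpr hmn).trans h

variable [MeasurableSpace D]

lemma measurableSet_comap_le_hittingTimeGe1 (hG : MeasurableSet G) (n : ℕ) :
    MeasurableSet[MeasurableSpace.comap (fun (ω : ℕ → D) (i : Fin n) => ω i) inferInstance]
      {ω | (n : ℕ∞) ≤ hittingTimeGe1 G ω} := by
  refine ⟨{v | ∀ i : Fin n, 1 ≤ (i : ℕ) → v i ∈ Gᶜ}, ?_, ?_⟩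
  · simp only [Set.ofPred_forall]
    exact MeasurableSet.iInter fun i => MeasurableSet.iInter fun _ =>
      measurable_pi_apply i hG.compl
  · ext ω
    simp only [Set.mem_preimage, Set.mem_ofPred_eq, Set.mem_compl_iff, le_hittingTimeGe1_iff]
    exact ⟨fun h m h1 hlt => h ⟨m, hlt⟩ h1, fun h i h1 => h i h1 i.isLt⟩

lemma measurableSet_le_hittingTimeGe1 (hG : MeasurableSet G) (n : ℕ) :
    MeasurableSet {ω : ℕ → D | (n : ℕ∞) ≤ hittingTimeGe1 G ω} :=
  measurable_iff_comap_le.mp (by fun_prop) _ (measurableSet_comap_le_hittingTimeGe1 hG n)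

end HittingTime

def HasMarkovProperty {D : Type*} [MeasurableSpace D] (κ : Kernel D D)
    (μ : Measure (ℕ → D)) : Prop :=
  ∀ (n : ℕ) (B : Set (ℕ → D)),
    MeasurableSet[MeasurableSpace.comap (fun (ω : ℕ → D) (i : Fin (n + 1)) => ω i)
      inferInstance] B →
    ∀ A : Set D, MeasurableSet A → μ (B ∩ {ω | ω (n + 1) ∈ A}) = ∫⁻ ω in B, κ (ω n) A ∂μ

section Markov

variable {D : Type*} [MeasurableSpace D] {κ : Kernel D D} {μ : Measure (ℕ → D)}

lemma HasMarkovProperty.setLIntegral_comp_succ (hμ : HasMarkovProperty κ μ) {n : ℕ}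
    {B : Set (ℕ → D)}
    (hB : MeasurableSet[MeasurableSpace.comap (fun (ω : ℕ → D) (i : Fin (n + 1)) => ω i)
      inferInstance] B)
    {f : D → ℝ≥0∞} (hf : Measurable f) :
    ∫⁻ ω in B, f (ω (n + 1)) ∂μ = ∫⁻ ω in B, ∫⁻ y, f y ∂κ (ω n) ∂μ := by
  have hκ : Measurable fun ω : ℕ → D => κ (ω n) := κ.measurable.comp (measurable_pi_apply n)
  have hlaw : (μ.restrict B).map (fun ω => ω (n + 1)) = (μ.restrict B).bind (κ <| · n) := by
    ext A hA
    rw [Measure.map_apply (measurable_pi_apply _) hA,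
      Measure.restrict_apply (measurable_pi_apply _ hA), Measure.bind_apply hA hκ.aemeasurable,
      Set.inter_comm]
    exact hμ n B hB A hA
  rw [← lintegral_map hf (measurable_pi_apply _), hlaw,
    Measure.lintegral_bind hκ.aemeasurable hf.aemeasurable]

end Markov

lemma lintegral_comp_eq_of_measure_eq_one {Ω D : Type*} [MeasurableSpace Ω] [MeasurableSpace D]
    {μ : Measure Ω} [IsProbabilityMeasure μ] {φ : Ω → D} (hφ : Measurable φ) {x : D}
    (h : μ {ω | φ ω = x} = 1) {f : D → ℝ≥0∞} (hf : Measurable f) :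
    ∫⁻ ω, f (φ ω) ∂μ = f x := by
  have hae : ∀ᵐ ω ∂μ, f (φ ω) = f x := by
    rw [ae_iff_measure_eq (p := fun ω => f (φ ω) = f x)
      (measurableSet_eq_fun (hf.comp hφ) measurable_const).nullMeasurableSet, measure_univ]
    exact le_antisymm prob_le_one (h ▸ measure_mono fun ω (hω : φ ω = x) => congrArg f hω)
  rw [lintegral_congr_ae hae, lintegral_const, measure_univ, mul_one]

lemma ENNReal.tsum_le_of_le_mul {a : ℕ → ℝ≥0∞} {r : ℝ≥0∞} (h : ∀ n, a (n + 1) ≤ r * a n) :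
    ∑' n, a n ≤ (1 - r)⁻¹ * a 0 := by
  have hgeom : ∀ n, a n ≤ r ^ n * a 0 := fun n => by
    induction n with
    | zero => simp
    | succ n ih => exact (h n).trans (by rw [pow_succ', mul_assoc]; gcongr)
  calc ∑' n, a n ≤ ∑' n, r ^ n * a 0 := ENNReal.tsum_le_tsum hgeom
    _ = (1 - r)⁻¹ * a 0 := by rw [ENNReal.tsum_mul_right, ENNReal.tsum_geometric]

section DriftBound

variable {D : Type*} [MeasurableSpace D] {κ : Kernel D D} {μ : Measure (ℕ → D)} {G : Set D}
  {W : D → ℝ≥0∞} {r : ℝ≥0∞}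

lemma setLIntegral_le_hittingTimeGe1_succ_le (hμ : HasMarkovProperty κ μ)
    (hG : MeasurableSet G) (hW : Measurable W) (hdrift : ∀ y ∉ G, ∫⁻ z, W z ∂κ y ≤ r * W y)
    (n : ℕ) :
    ∫⁻ ω in {ω | ((n + 2 : ℕ) : ℕ∞) ≤ hittingTimeGe1 G ω}, W (ω (n + 2)) ∂μ
      ≤ r * ∫⁻ ω in {ω | ((n + 1 : ℕ) : ℕ∞) ≤ hittingTimeGe1 G ω}, W (ω (n + 1)) ∂μ := by
  calc _ = ∫⁻ ω in {ω | ((n + 2 : ℕ) : ℕ∞) ≤ hittingTimeGe1 G ω},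
        ∫⁻ z, W z ∂κ (ω (n + 1)) ∂μ :=
        hμ.setLIntegral_comp_succ (measurableSet_comap_le_hittingTimeGe1 hG (n + 2)) hW
    _ ≤ ∫⁻ ω in {ω | ((n + 2 : ℕ) : ℕ∞) ≤ hittingTimeGe1 G ω}, r * W (ω (n + 1)) ∂μ :=
        setLIntegral_mono' (measurableSet_le_hittingTimeGe1 hG _) fun ω hω =>
          hdrift _ (notMem_of_succ_le_hittingTimeGe1 n.succ_pos hω)
    _ ≤ _ := by
        rw [lintegral_const_mul _ (by fun_prop)]
        gcongr 1
        exact lintegral_mono_set (antitone_setOf_le_hittingTimeGe1 G (n + 1).le_succ)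

theorem lintegral_tsum_indicator_le_hittingTimeGe1_le [IsProbabilityMeasure μ]
    (hμ : HasMarkovProperty κ μ) {x : D} (hstart : μ {ω | ω 0 = x} = 1) (hG : MeasurableSet G)
    (hW : Measurable W) (hdrift : ∀ y ∉ G, ∫⁻ z, W z ∂κ y ≤ r * W y) :
    ∫⁻ ω, ∑' n, Set.indicator {m : ℕ | 1 ≤ m ∧ (m : ℕ∞) ≤ hittingTimeGe1 G ω}
        (fun m => W (ω m)) n ∂μ ≤ (1 - r)⁻¹ * ∫⁻ y, W y ∂κ x := by
  set a : ℕ → ℝ≥0∞ := fun n =>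
    ∫⁻ ω in {ω | ((n + 1 : ℕ) : ℕ∞) ≤ hittingTimeGe1 G ω}, W (ω (n + 1)) ∂μ
  have hsum : ∫⁻ ω, ∑' n, Set.indicator {m : ℕ | 1 ≤ m ∧ (m : ℕ∞) ≤ hittingTimeGe1 G ω}
      (fun m => W (ω m)) n ∂μ = ∑' n, a n := by
    have hshift : ∀ ω : ℕ → D,
        ∑' n, Set.indicator {m : ℕ | 1 ≤ m ∧ (m : ℕ∞) ≤ hittingTimeGe1 G ω} (fun m => W (ω m)) n
          = ∑' n, Set.indicator {ω | ((n + 1 : ℕ) : ℕ∞) ≤ hittingTimeGe1 G ω}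
              (fun ω => W (ω (n + 1))) ω := fun ω => by
      rw [tsum_eq_zero_add' ENNReal.summable]
      simp [Set.indicator_apply]
    simp_rw [hshift]
    rw [lintegral_tsum fun n =>
      ((by fun_prop : Measurable fun ω : ℕ → D => W (ω (n + 1))).indicator
        (measurableSet_le_hittingTimeGe1 hG _)).aemeasurable]
    exact tsum_congr fun n => lintegral_indicator (measurableSet_le_hittingTimeGe1 hG _) _
  have ha0 : a 0 = ∫⁻ y, W y ∂κ x := by
    have hσ1 : {ω | ((0 + 1 : ℕ) : ℕ∞) ≤ hittingTimeGe1 G ω} = Set.univ :=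
      Set.eq_univ_of_forall fun ω => le_hittingTimeGe1_iff.mpr fun m h1 hlt => by omega
    calc a 0 = ∫⁻ ω in Set.univ, W (ω (0 + 1)) ∂μ := by simp only [a, hσ1]
      _ = ∫⁻ ω in Set.univ, ∫⁻ y, W y ∂κ (ω 0) ∂μ :=
        hμ.setLIntegral_comp_succ MeasurableSet.univ hW
      _ = ∫⁻ y, W y ∂κ x := by
        rw [Measure.restrict_univ]
        exact lintegral_comp_eq_of_measure_eq_one (measurable_pi_apply 0) hstart
          hW.lintegral_kernel
  rw [hsum, ← ha0]
  exact ENNReal.tsum_le_of_le_mul (setLIntegral_le_hittingTimeGe1_succ_le hμ hG hW hdrift)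

end DriftBound

theorem drift_sum_until_hitting_le_general
    {D : Type*} [MeasurableSpace D]
    (κ : ProbabilityTheory.Kernel D D)
    (Px : D → Measure (ℕ → D))
    (hprob : ∀ x, IsProbabilityMeasure (Px x))
    (hstart : ∀ x, Px x {ω | ω 0 = x} = 1)
    (hMarkov : ∀ (x : D) (n : ℕ) (B : Set (ℕ → D)),
      MeasurableSet[MeasurableSpace.comap (fun (ω : ℕ → D) (i : Fin (n + 1)) => ω i)
        inferInstance] B →
      ∀ A : Set D, MeasurableSet A →
        Px x (B ∩ {ω | ω (n + 1) ∈ A}) = ∫⁻ ω in B, κ (ω n) A ∂(Px x))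
    (V : D → ℝ) (hV_meas : Measurable V) (hV_one : ∀ x, 1 ≤ V x)
    (G : Set D) (hG : MeasurableSet G)
    (β b : ℝ) (hβ : 0 < β) (hβ1 : β < 1) (hb : 0 ≤ b)
    (hdrift : ∀ x, ∫⁻ y, ENNReal.ofReal (V y) ∂(κ x)
      ≤ ENNReal.ofReal ((1 - β) * V x + b * G.indicator 1 x)) :
    ∀ x : D,
      ∫⁻ ω, (∑' n : ℕ,
          Set.indicator {m : ℕ | 1 ≤ m ∧ (m : ℕ∞) ≤ hittingTimeGe1 G ω}
            (fun m => ENNReal.ofReal (V (ω m))) n) ∂(Px x)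
        ≤ ENNReal.ofReal ((V x + b) / β) := by
  intro x
  have := hprob x
  have hdrift_off : ∀ y ∉ G, ∫⁻ z, ENNReal.ofReal (V z) ∂κ y
      ≤ ENNReal.ofReal (1 - β) * ENNReal.ofReal (V y) := fun y hy => by
    simpa [Set.indicator_of_notMem hy, ENNReal.ofReal_mul (sub_nonneg.mpr hβ1.le)]
      using hdrift y
  have hdrift_x : ∫⁻ z, ENNReal.ofReal (V z) ∂κ x ≤ ENNReal.ofReal (V x + b) :=
    (hdrift x).trans <| ENNReal.ofReal_le_ofReal <| add_le_add
      (by nlinarith [hV_one x]) (mul_le_of_le_one_right hb (Set.indicator_le_self' (by simp) x))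
  have hrate : 1 - ENNReal.ofReal (1 - β) = ENNReal.ofReal β := by
    rw [← ENNReal.ofReal_one, ← ENNReal.ofReal_sub _ (sub_nonneg.mpr hβ1.le), sub_sub_self]
  calc _ ≤ (1 - ENNReal.ofReal (1 - β))⁻¹ * ∫⁻ z, ENNReal.ofReal (V z) ∂κ x :=
        lintegral_tsum_indicator_le_hittingTimeGe1_le (hMarkov x) (hstart x) hG
          (by fun_prop) hdrift_off
    _ ≤ (ENNReal.ofReal β)⁻¹ * ENNReal.ofReal (V x + b) := by rw [hrate]; gcongr
    _ = ENNReal.ofReal ((V x + b) / β) := by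
        rw [ENNReal.ofReal_div_of_pos hβ, div_eq_mul_inv, mul_comm]

/-- For the Markov chain with kernel `κ` started at `x` (law `Px x` on path
space), under the drift condition `∫ V(y) κ(x, dy) ≤ (1 − β)·V(x) + b·1_G(x)`, one has
`E_x[Σ_{n=1}^{σ} V(X_n)] ≤ (V(x) + b)/β`, where the sum is interpreted as
`Σ_{n ≥ 1} V(X_n)·1_{n ≤ σ}` with values in `[0, ∞]`. -/
theorem drift_sum_until_hitting_le
    {D : Type*} [MeasurableSpace D]
    (κ : ProbabilityTheory.Kernel D D) [ProbabilityTheory.IsMarkovKernel κ]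
    (Px : D → Measure (ℕ → D))
    (hprob : ∀ x, IsProbabilityMeasure (Px x))
    (hstart : ∀ x, Px x {ω | ω 0 = x} = 1)
    (hMarkov : ∀ (x : D) (n : ℕ) (B : Set (ℕ → D)),
      MeasurableSet[MeasurableSpace.comap (fun (ω : ℕ → D) (i : Fin (n + 1)) => ω i)
        inferInstance] B →
      ∀ A : Set D, MeasurableSet A →
        Px x (B ∩ {ω | ω (n + 1) ∈ A}) = ∫⁻ ω in B, κ (ω n) A ∂(Px x))
    (V : D → ℝ) (hV_meas : Measurable V) (hV_one : ∀ x, 1 ≤ V x)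
    (G : Set D) (hG : MeasurableSet G)
    (β b : ℝ) (hβ : 0 < β) (hβ1 : β < 1) (hb : 0 ≤ b)
    (hdrift : ∀ x, ∫⁻ y, ENNReal.ofReal (V y) ∂(κ x)
      ≤ ENNReal.ofReal ((1 - β) * V x + b * G.indicator 1 x)) :
    ∀ x : D,
      ∫⁻ ω, (∑' n : ℕ,
          Set.indicator {m : ℕ | 1 ≤ m ∧ (m : ℕ∞) ≤ hittingTimeGe1 G ω}
            (fun m => ENNReal.ofReal (V (ω m))) n) ∂(Px x)
        ≤ ENNReal.ofReal ((V x + b) / β) :=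
  drift_sum_until_hitting_le_general κ Px hprob hstart hMarkov V hV_meas hV_one G hG β b hβ hβ1 hb
    hdrift
end

section
/- Let θ ∈ ℝ^k and let z_j ≥ 0 for every j ∉ J(θ). Then the following two conditions are equivalent: (i) for every θ' ∈ B(θ), Σ_{j ∉ J(θ)} I(θ_j, θ'_j)·z_j ≥ 1; (ii) for every j ∉ J(θ), z_j·I(θ_j, θ*) ≥ 1. (This is the reduction of the regret lower-bound constraint system to the Lai–Robbins constraints in the one-group case.) -/
open Finset

/-- One-group reduction of the regret lower-bound constraints to the
Lai–Robbins constraints.  For `θ ∈ ℝ^k` with `θ* = max_i θ i`, optimal-arm set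
`J(θ) = {j : θ j = θ*}`, bad set
`B(θ) = {θ' : θ' j = θ j for all j ∈ J(θ), and J(θ') ∩ J(θ) = ∅}`, and `z j ≥ 0` for
`j ∉ J(θ)`, the following are equivalent:
(i) `Σ_{j ∉ J(θ)} I(θ j, θ' j)·z j ≥ 1` for all `θ' ∈ B(θ)`;
(ii) `z j · I(θ j, θ*) ≥ 1` for all `j ∉ J(θ)`. -/
theorem oneGroup_constraints_iff_LaiRobbins
    {k : ℕ} (hk : 0 < k)
    (I : ℝ → ℝ → ℝ)
    (hI_nonneg : ∀ a b, 0 ≤ I a b)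
    (hI_eq_zero : ∀ a b, I a b = 0 ↔ a = b)
    (hI_cont : ∀ a, Continuous fun b => I a b)
    (hI_mono : ∀ a, StrictMonoOn (fun b => I a b) (Set.Ici a))
    (θ : Fin k → ℝ) (z : Fin k → ℝ)
    (hz : ∀ j, θ j ≠ (⨆ i, θ i) → 0 ≤ z j) :
    (∀ θ' : Fin k → ℝ,
        ((∀ j, θ j = (⨆ i, θ i) → θ' j = θ j) ∧
          (∀ j, θ' j = (⨆ i, θ' i) → θ j ≠ (⨆ i, θ i))) →
        1 ≤ ∑ j ∈ Finset.univ.filter (fun j => θ j ≠ (⨆ i, θ i)), I (θ j) (θ' j) * z j)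
    ↔ (∀ j, θ j ≠ (⨆ i, θ i) → 1 ≤ z j * I (θ j) (⨆ i, θ i)) := by
  haveI : Nonempty (Fin k) := ⟨⟨0, hk⟩⟩
  have hbdd : BddAbove (Set.range θ) := (Set.finite_range θ).bddAbove
  have hle : ∀ j, θ j ≤ ⨆ i, θ i := fun j => le_ciSup hbdd j
  obtain ⟨i0, hi0⟩ := Finite.exists_max θ
  have hi0eq : θ i0 = ⨆ i, θ i := le_antisymm (hle i0) (ciSup_le hi0)
  constructor
  · intro h j0 hj0
    -- use θ' = update θ j0 (θ* + ε)
    have key : ∀ ε : ℝ, 0 < ε → 1 ≤ I (θ j0) ((⨆ i, θ i) + ε) * z j0 := by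
      intro ε hε
      set θ' : Fin k → ℝ := Function.update θ j0 ((⨆ i, θ i) + ε) with hθ'
      have hj0' : θ' j0 = (⨆ i, θ i) + ε := Function.update_self _ _ _
      have hoth : ∀ j, j ≠ j0 → θ' j = θ j := fun j hj =>
        Function.update_of_ne hj _ _
      have h1 : ∀ j, θ j = (⨆ i, θ i) → θ' j = θ j := by
        intro j hj
        have : j ≠ j0 := by rintro rfl; exact hj0 hj
        exact hoth j this
      have h2 : ∀ j, θ' j = (⨆ i, θ' i) → θ j ≠ (⨆ i, θ i) := by
        intro j hj hcon
        have hjn : j ≠ j0 := by rintro rfl; exact hj0 hcon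
        have hbdd' : BddAbove (Set.range θ') := (Set.finite_range θ').bddAbove
        have : (⨆ i, θ i) + ε ≤ θ' j := by
          rw [hj, ← hj0']; exact le_ciSup hbdd' j0
        rw [hoth j hjn, hcon] at this
        linarith
      have hsum := h θ' ⟨h1, h2⟩
      have hsum_eq : ∑ j ∈ Finset.univ.filter (fun j => θ j ≠ (⨆ i, θ i)),
          I (θ j) (θ' j) * z j = I (θ j0) ((⨆ i, θ i) + ε) * z j0 := by
        rw [Finset.sum_eq_single (f := fun j => I (θ j) (θ' j) * z j) j0]
        · rw [hj0']
        · intro j hj hjn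
          rw [hoth j hjn, (hI_eq_zero (θ j) (θ j)).2 rfl, zero_mul]
        · intro hmem
          exact (hmem (Finset.mem_filter.2 ⟨Finset.mem_univ j0, hj0⟩)).elim
      rw [hsum_eq] at hsum
      exact hsum
    rw [mul_comm]
    have hcont : ContinuousAt (fun ε : ℝ => I (θ j0) ((⨆ i, θ i) + ε) * z j0) 0 :=
      (((hI_cont (θ j0)).comp (continuous_const.add continuous_id)).mul
        continuous_const).continuousAt
    have htend : Filter.Tendsto (fun ε : ℝ => I (θ j0) ((⨆ i, θ i) + ε) * z j0)
        (nhdsWithin 0 (Set.Ioi 0)) (nhds (I (θ j0) ((⨆ i, θ i) + 0) * z j0)) :=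
      hcont.tendsto.mono_left nhdsWithin_le_nhds
    have := ge_of_tendsto htend (by
      filter_upwards [self_mem_nhdsWithin] with ε (hε : ε ∈ Set.Ioi 0)
      exact key ε hε)
    simpa using this
  · intro h θ' ⟨h1, h2⟩
    obtain ⟨j0, hj0⟩ := Finite.exists_max θ'
    have hj0sup : θ' j0 = ⨆ i, θ' i :=
      le_antisymm (le_ciSup ((Set.finite_range θ').bddAbove) j0) (ciSup_le hj0)
    have hj0ne : θ j0 ≠ (⨆ i, θ i) := h2 j0 hj0sup
    have hθ'i0 : θ' i0 = ⨆ i, θ i := by rw [h1 i0 hi0eq, hi0eq]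
    have hge : (⨆ i, θ i) ≤ θ' j0 := hθ'i0 ▸ hj0 i0
    have hmono : I (θ j0) (⨆ i, θ i) ≤ I (θ j0) (θ' j0) :=
      (hI_mono (θ j0)).monotoneOn (hle j0) (le_trans (hle j0) hge) hge
    have hterm : 1 ≤ I (θ j0) (θ' j0) * z j0 := by
      calc 1 ≤ z j0 * I (θ j0) (⨆ i, θ i) := h j0 hj0ne
        _ = I (θ j0) (⨆ i, θ i) * z j0 := mul_comm _ _
        _ ≤ I (θ j0) (θ' j0) * z j0 :=
          mul_le_mul_of_nonneg_right hmono (hz j0 hj0ne)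
    refine le_trans hterm (Finset.single_le_sum (f := fun j => I (θ j) (θ' j) * z j) (fun j hj => ?_) ?_)
    · exact mul_nonneg (hI_nonneg _ _) (hz j (Finset.mem_filter.1 hj).2)
    · exact Finset.mem_filter.2 ⟨Finset.mem_univ _, hj0ne⟩
end
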